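/- Let θ be a congruence on the Płonka sum A of a semilattice direct system of groups. Then S_θ is transitive, and hence S_θ is a semilattice congruence on I. (This is the instance, for Clifford semigroups, of the general fact that S_θ is transitive whenever the images of the transition homomorphisms into a common fiber always intersect; here every image contains the identity element of the target group.) -/

import Mathlib

/-! Płonka sum of a semilattice direct system of groups.

`I` is a join-semilattice, `G i` are groups, and `p i j h : G i →* G j` (for `h : i ≤ j`)
are the transition homomorphisms. The Płonka sum is the sigma type `Σ i, G i` with
multiplication `⟨i,a⟩·⟨j,b⟩ = ⟨i⊔j, p_{i,i⊔j}(a) · p_{j,i⊔j}(b)⟩` and inversion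
`⟨i,a⟩⁻¹ = ⟨i,a⁻¹⟩` (a Clifford semigroup). -/

variable {I : Type*} [SemilatticeSup I] {G : I → Type*} [∀ i, Group (G i)]

/-- Multiplication of the Płonka sum. -/
def pmul (p : ∀ i j : I, i ≤ j → (G i →* G j)) (x y : Σ i, G i) : Σ i, G i :=
  ⟨x.1 ⊔ y.1, p x.1 (x.1 ⊔ y.1) le_sup_left x.2 * p y.1 (x.1 ⊔ y.1) le_sup_right y.2⟩

/-- Inversion of the Płonka sum. -/
def pinv (x : Σ i, G i) : Σ i, G i := ⟨x.1, x.2⁻¹⟩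

/-- `θ` is a congruence on the Płonka sum: an equivalence relation compatible with
multiplication and inversion. -/
def IsCong (p : ∀ i j : I, i ≤ j → (G i →* G j))
    (θ : (Σ i, G i) → (Σ i, G i) → Prop) : Prop :=
  Equivalence θ ∧
    (∀ x x' y y', θ x x' → θ y y' → θ (pmul p x y) (pmul p x' y')) ∧
    (∀ x x', θ x x' → θ (pinv x) (pinv x'))

/-- `S_θ`: the pairs of indices related by `θ`. -/
def Srel (θ : (Σ i, G i) → (Σ i, G i) → Prop) (i j : I) : Prop :=
  ∃ (a : G i) (b : G j), θ ⟨i, a⟩ ⟨j, b⟩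

/-- `C_θ`. -/
def Crel (θ : (Σ i, G i) → (Σ i, G i) → Prop) (i j : I) : Prop :=
  Srel θ i (i ⊔ j) ∧ Srel θ j (i ⊔ j)

/-- A semilattice congruence on `I`: an equivalence relation compatible with `⊔`. -/
def IsSemilatticeCong {I : Type*} [SemilatticeSup I] (C : I → I → Prop) : Prop :=
  Equivalence C ∧ ∀ i₁ j₁ i₂ j₂, C i₁ j₁ → C i₂ j₂ → C (i₁ ⊔ i₂) (j₁ ⊔ j₂)

/-!
A relation `θ ⟨i, a⟩ ⟨j, b⟩` can be normalised to `θ ⟨i, 1⟩ ⟨j, 1⟩` by multiplying it with its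
own inverse, since `x · x⁻¹ = ⟨i, 1⟩` in the Płonka sum. Hence `S_θ` is the preimage of `θ` under
the map `i ↦ ⟨i, 1⟩`, which is multiplicative because the transition maps preserve `1`. The
preimage of a congruence under a `⊔`-homomorphism is a semilattice congruence.
-/

theorem Sigma.mk_one_congr {ι : Type*} {M : ι → Type*} [∀ i, One (M i)] {i j : ι} (h : i = j) :
    (⟨i, 1⟩ : Σ i, M i) = ⟨j, 1⟩ := by
  subst h; rfl

section PlonkaSum

variable {p : ∀ i j : I, i ≤ j → (G i →* G j)} {θ : (Σ i, G i) → (Σ i, G i) → Prop}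

theorem pmul_mk_one_mk_one (i j : I) :
    pmul p ⟨i, (1 : G i)⟩ ⟨j, (1 : G j)⟩ = ⟨i ⊔ j, 1⟩ := by
  simp only [pmul, map_one, mul_one]

theorem pmul_pinv_self (x : Σ i, G i) : pmul p x (pinv x) = ⟨x.1, 1⟩ := by
  obtain ⟨i, a⟩ := x
  have hinv : p i (i ⊔ i) le_sup_left a * p i (i ⊔ i) le_sup_right a⁻¹ = 1 := by
    rw [map_inv, mul_inv_cancel]
  calc pmul p ⟨i, a⟩ (pinv ⟨i, a⟩) = ⟨i ⊔ i, 1⟩ := by rw [pmul, pinv, hinv]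
    _ = ⟨i, 1⟩ := Sigma.mk_one_congr (sup_idem i)

namespace IsCong

theorem rel_mk_one_of_srel (hθ : IsCong p θ) {i j : I} (h : Srel θ i j) :
    θ ⟨i, 1⟩ ⟨j, 1⟩ := by
  obtain ⟨a, b, hab⟩ := h
  have := hθ.2.1 _ _ _ _ hab (hθ.2.2 _ _ hab)
  rwa [pmul_pinv_self, pmul_pinv_self] at this

theorem srel_eq_onFun (hθ : IsCong p θ) : Srel θ = Function.onFun θ (fun i => ⟨i, 1⟩) := by
  funext i j
  exact propext ⟨hθ.rel_mk_one_of_srel, fun h => ⟨1, 1, h⟩⟩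

theorem srel_trans (hθ : IsCong p θ) {i j k : I} (hij : Srel θ i j) (hjk : Srel θ j k) :
    Srel θ i k := by
  rw [hθ.srel_eq_onFun] at hij hjk ⊢
  exact hθ.1.trans hij hjk

theorem isSemilatticeCong_srel (hθ : IsCong p θ) : IsSemilatticeCong (Srel θ) := by
  rw [hθ.srel_eq_onFun]
  refine ⟨hθ.1.comap _, fun i₁ j₁ i₂ j₂ h₁ h₂ => ?_⟩
  have := hθ.2.1 _ _ _ _ h₁ h₂
  rwa [pmul_mk_one_mk_one, pmul_mk_one_mk_one] at this

end IsCong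

end PlonkaSum

theorem Srel_is_semilattice_congruence_general
    (p : ∀ i j : I, i ≤ j → (G i →* G j))
    (θ : (Σ i, G i) → (Σ i, G i) → Prop) (hθ : IsCong p θ) :
    (∀ i j k : I, Srel θ i j → Srel θ j k → Srel θ i k) ∧
    IsSemilatticeCong (Srel θ) :=
  ⟨fun _ _ _ => hθ.srel_trans, hθ.isSemilatticeCong_srel⟩

/-- For a congruence `θ` on the Płonka sum of a semilattice direct system of groups,
`S_θ` is transitive, and hence `S_θ` is a semilattice congruence on `I`. -/
theorem Srel_is_semilattice_congruence
    (p : ∀ i j : I, i ≤ j → (G i →* G j))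
    (hid : ∀ (i : I) (h : i ≤ i) (a : G i), p i i h a = a)
    (hcomp : ∀ (i j k : I) (hij : i ≤ j) (hjk : j ≤ k) (a : G i),
      p j k hjk (p i j hij a) = p i k (hij.trans hjk) a)
    (θ : (Σ i, G i) → (Σ i, G i) → Prop) (hθ : IsCong p θ) :
    (∀ i j k : I, Srel θ i j → Srel θ j k → Srel θ i k) ∧
    IsSemilatticeCong (Srel θ) :=
  Srel_is_semilattice_congruence_general p θ hθ
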